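/- For t in the open cube (0,1)^J, the unique solution β̃_t of L_t u = (1/n) X_t^T y is a differentiable function of t, and its partial derivative with respect to t_j equals L_t^{-1}[E_j − E_j Z T_t L_t^{-1} T_t − T_t Z E_j L_t^{-1} T_t] (X^T y / n), where Z = X^T X / n − I and E_j is the diagonal matrix selecting the coordinates of group j. -/

import Mathlib

open Matrix

/-- Group-structured diagonal matrix `T_t` repeating each `t j` over group `j`. -/
noncomputable def Tmat {p J : ℕ} (g : Fin p → Fin J) (t : Fin J → ℝ) :
    Matrix (Fin p) (Fin p) ℝ :=
  Matrix.diagonal fun i => t (g i)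

/-- `Z = (1/n) Xᵀ X − I`. -/
noncomputable def Zmat {n p : ℕ} (X : Matrix (Fin n) (Fin p) ℝ) :
    Matrix (Fin p) (Fin p) ℝ :=
  ((1 : ℝ) / n) • (Xᵀ * X) - 1

/-- `L_t = T_t Z T_t + I`. -/
noncomputable def Lmat {n p J : ℕ} (X : Matrix (Fin n) (Fin p) ℝ)
    (g : Fin p → Fin J) (t : Fin J → ℝ) : Matrix (Fin p) (Fin p) ℝ :=
  Tmat g t * Zmat X * Tmat g t + 1

/-- `E_j`: the diagonal matrix selecting the coordinates of group `j`. -/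
noncomputable def Emat {p J : ℕ} (g : Fin p → Fin J) (j : Fin J) :
    Matrix (Fin p) (Fin p) ℝ :=
  Matrix.diagonal fun i => if g i = j then (1 : ℝ) else 0

/-- `β̃_t = L_t⁻¹ ((1/n) X_tᵀ y)` with `X_t = X T_t`. -/
noncomputable def betaT {n p J : ℕ} (X : Matrix (Fin n) (Fin p) ℝ)
    (g : Fin p → Fin J) (y : Fin n → ℝ) (t : Fin J → ℝ) : Fin p → ℝ :=
  (Lmat X g t)⁻¹.mulVec (((1 : ℝ) / n) • ((X * Tmat g t)ᵀ.mulVec y))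

/-!
Write `v = Xᵀy/n`. Since `T_t` is symmetric, `β̃_t = (L_t⁻¹ T_t) v`, and
`L_t = (1/n)(X T_t)ᵀ(X T_t) + (I - T_t²)` is positive definite on the cube, hence invertible.
The map `t ↦ T_t` is linear with `∂T_t/∂t_j = E_j`, so `∂L_t/∂t_j = E_j Z T_t + T_t Z E_j`, and
the derivative `-L⁻¹ L̇ L⁻¹` of inversion together with the product rule gives
`∂β̃_t/∂t_j = (-L_t⁻¹ (E_j Z T_t + T_t Z E_j) L_t⁻¹ T_t + L_t⁻¹ E_j) v`, which is the stated formula.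
-/

theorem HasDerivAt.ringInverse {𝕜 R : Type*} [NontriviallyNormedField 𝕜] [NormedRing R]
    [HasSummableGeomSeries R] [NormedAlgebra 𝕜 R] {f : 𝕜 → R} {f' : R} {x : 𝕜}
    (hf : HasDerivAt f f' x) (hx : IsUnit (f x)) :
    HasDerivAt (fun y => Ring.inverse (f y))
      (-(Ring.inverse (f x) * f' * Ring.inverse (f x))) x := by
  obtain ⟨u, hu⟩ := hx
  have hinv := hasFDerivAt_ringInverse (𝕜 := 𝕜) u
  rw [hu] at hinv
  simpa [← hu, Ring.inverse_unit, Function.comp_def] using hinv.comp_hasDerivAt x hf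

section

/- Derivatives of matrix-valued maps do not depend on the norm; the `ℓ∞` operator norm makes
square matrices a complete normed algebra, so that `Ring.inverse` can be differentiated. -/
attribute [local instance] Matrix.linftyOpNormedRing Matrix.linftyOpNormedAlgebra

section SquareMatrix

variable {ι : Type*} [Fintype ι] [DecidableEq ι]

theorem HasDerivAt.matrix_inv {A : ℝ → Matrix ι ι ℝ} {A' : Matrix ι ι ℝ} {x : ℝ}
    (hA : HasDerivAt A A' x) (hx : IsUnit (A x)) :
    HasDerivAt (fun y => (A y)⁻¹) (-((A x)⁻¹ * A' * (A x)⁻¹)) x := by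
  simp only [nonsing_inv_eq_ringInverse]
  exact hA.ringInverse hx

theorem DifferentiableAt.matrix_inv {E : Type*} [NormedAddCommGroup E] [NormedSpace ℝ E]
    {A : E → Matrix ι ι ℝ} {x : E} (hA : DifferentiableAt ℝ A x) (hx : IsUnit (A x)) :
    DifferentiableAt ℝ (fun y => (A y)⁻¹) x := by
  simp only [nonsing_inv_eq_ringInverse]
  exact hA.inverse hx

noncomputable def mulVecCLM (v : ι → ℝ) : Matrix ι ι ℝ →L[ℝ] ι → ℝ :=
  LinearMap.toContinuousLinearMap ((mulVecBilin ℝ ℝ).flip v)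

end SquareMatrix

variable {n p J : ℕ} (X : Matrix (Fin n) (Fin p) ℝ) (g : Fin p → Fin J) (y : Fin n → ℝ)

noncomputable def TmatCLM : (Fin J → ℝ) →L[ℝ] Matrix (Fin p) (Fin p) ℝ :=
  LinearMap.toContinuousLinearMap (diagonalLinearMap (Fin p) ℝ ℝ ∘ₗ LinearMap.funLeft ℝ ℝ g)

theorem Tmat_single (j : Fin J) : Tmat g (Pi.single j 1) = Emat g j := by
  simp only [Tmat, Emat, Pi.single_apply]

theorem betaT_eq_mulVec (t : Fin J → ℝ) :
    betaT X g y t = ((Lmat X g t)⁻¹ * Tmat g t) *ᵥ (((1 : ℝ) / n) • (Xᵀ *ᵥ y)) := by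
  rw [betaT, transpose_mul, Tmat, diagonal_transpose, ← mulVec_mulVec, ← mulVec_mulVec]
  simp only [mulVec_smul]

theorem Lmat_eq (t : Fin J → ℝ) :
    Lmat X g t = ((1 : ℝ) / n) • (X * Tmat g t)ᵀ * (X * Tmat g t)
      + diagonal fun i => 1 - t (g i) ^ 2 := by
  have hsq : (diagonal fun i => 1 - t (g i) ^ 2) = 1 - Tmat g t * Tmat g t := by
    rw [Tmat, diagonal_mul_diagonal, ← diagonal_one, diagonal_sub]
    simp only [sq]
  rw [hsq, transpose_mul, Tmat, diagonal_transpose, Lmat, Zmat, Tmat]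
  simp only [Matrix.mul_sub, Matrix.sub_mul, Matrix.mul_smul, Matrix.smul_mul, Matrix.mul_one,
    Matrix.mul_assoc]
  abel

theorem Lmat_posDef {t : Fin J → ℝ} (ht : ∀ j, |t j| < 1) : (Lmat X g t).PosDef := by
  rw [Lmat_eq, ← conjTranspose_eq_transpose_of_trivial, Matrix.smul_mul]
  exact PosDef.posSemidef_add ((posSemidef_conjTranspose_mul_self _).smul (by positivity))
    (PosDef.diagonal fun i => sub_pos.mpr ((sq_lt_one_iff_abs_lt_one _).mpr (ht (g i))))

theorem hasDerivAt_Tmat_comp {γ : ℝ → Fin J → ℝ} {γ' : Fin J → ℝ} {x : ℝ}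
    (hγ : HasDerivAt γ γ' x) : HasDerivAt (fun s => Tmat g (γ s)) (Tmat g γ') x :=
  (TmatCLM g).hasFDerivAt.comp_hasDerivAt x hγ

theorem hasDerivAt_Lmat_comp {γ : ℝ → Fin J → ℝ} {γ' : Fin J → ℝ} {x : ℝ}
    (hγ : HasDerivAt γ γ' x) :
    HasDerivAt (fun s => Lmat X g (γ s))
      (Tmat g γ' * Zmat X * Tmat g (γ x) + Tmat g (γ x) * Zmat X * Tmat g γ') x := by
  have hT := hasDerivAt_Tmat_comp g hγ
  unfold Lmat
  exact ((hT.mul_const (Zmat X)).fun_mul hT).add_const 1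

theorem hasDerivAt_betaT_comp {γ : ℝ → Fin J → ℝ} {γ' : Fin J → ℝ} {x : ℝ}
    (hγ : HasDerivAt γ γ' x) (hx : IsUnit (Lmat X g (γ x))) :
    HasDerivAt (fun s => betaT X g y (γ s))
      ((-((Lmat X g (γ x))⁻¹ * (Tmat g γ' * Zmat X * Tmat g (γ x) +
          Tmat g (γ x) * Zmat X * Tmat g γ') * (Lmat X g (γ x))⁻¹) * Tmat g (γ x)
        + (Lmat X g (γ x))⁻¹ * Tmat g γ') *ᵥ (((1 : ℝ) / n) • (Xᵀ *ᵥ y))) x := by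
  simp only [betaT_eq_mulVec]
  have hLinv := (hasDerivAt_Lmat_comp X g hγ).matrix_inv hx
  exact (mulVecCLM _).hasFDerivAt.comp_hasDerivAt x (hLinv.fun_mul (hasDerivAt_Tmat_comp g hγ))

theorem differentiableAt_betaT {t : Fin J → ℝ} (ht : IsUnit (Lmat X g t)) :
    DifferentiableAt ℝ (betaT X g y) t := by
  have hT : DifferentiableAt ℝ (Tmat g) t := (TmatCLM g).differentiableAt
  have hL : DifferentiableAt ℝ (Lmat X g) t := ((hT.mul_const (Zmat X)).mul hT).add_const 1
  rw [funext (betaT_eq_mulVec X g y)]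
  exact (mulVecCLM _).differentiableAt.comp t ((hL.matrix_inv ht).mul hT)

end

theorem betaT_hasDerivAt_general (n p J : ℕ)
    (X : Matrix (Fin n) (Fin p) ℝ) (g : Fin p → Fin J) (y : Fin n → ℝ)
    (t : Fin J → ℝ) (ht : ∀ j, t j ∈ Set.Ioo (0 : ℝ) 1) :
    DifferentiableAt ℝ (fun t' : Fin J → ℝ => betaT X g y t') t ∧
    ∀ j : Fin J,
      HasDerivAt (fun x : ℝ => betaT X g y (Function.update t j x))
        ((Lmat X g t)⁻¹.mulVec
          ((Emat g j -
              Emat g j * Zmat X * Tmat g t * (Lmat X g t)⁻¹ * Tmat g t -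
              Tmat g t * Zmat X * Emat g j * (Lmat X g t)⁻¹ * Tmat g t).mulVec
            (((1 : ℝ) / n) • (Xᵀ.mulVec y))))
        (t j) := by
  have hunit : IsUnit (Lmat X g t) :=
    (Lmat_posDef X g fun j => abs_lt.mpr ⟨by linarith [(ht j).1], (ht j).2⟩).isUnit
  refine ⟨differentiableAt_betaT X g y hunit, fun j => ?_⟩
  have h := hasDerivAt_betaT_comp X g y (hasDerivAt_update t j (t j))
    (by rwa [Function.update_eq_self])
  rw [Function.update_eq_self, Tmat_single] at h
  convert h using 1
  rw [mulVec_mulVec]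
  congr 1
  noncomm_ring

/-- For `t` in the open cube `(0,1)^J`, the unique solution `β̃_t` of
`L_t u = (1/n) X_tᵀ y` is a differentiable function of `t`, and its partial derivative
with respect to `t_j` equals
`L_t⁻¹ [E_j − E_j Z T_t L_t⁻¹ T_t − T_t Z E_j L_t⁻¹ T_t] (Xᵀ y / n)`. -/
theorem betaT_hasDerivAt (n p J : ℕ) (hn : 0 < n)
    (X : Matrix (Fin n) (Fin p) ℝ) (g : Fin p → Fin J) (y : Fin n → ℝ)
    (t : Fin J → ℝ) (ht : ∀ j, t j ∈ Set.Ioo (0 : ℝ) 1) :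
    DifferentiableAt ℝ (fun t' : Fin J → ℝ => betaT X g y t') t ∧
    ∀ j : Fin J,
      HasDerivAt (fun x : ℝ => betaT X g y (Function.update t j x))
        ((Lmat X g t)⁻¹.mulVec
          ((Emat g j -
              Emat g j * Zmat X * Tmat g t * (Lmat X g t)⁻¹ * Tmat g t -
              Tmat g t * Zmat X * Emat g j * (Lmat X g t)⁻¹ * Tmat g t).mulVec
            (((1 : ℝ) / n) • (Xᵀ.mulVec y))))
        (t j) :=
  betaT_hasDerivAt_general n p J X g y t ht
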